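/- arXiv:2602.10842 — 2 statements merged into one kernel-verified Lean document; each statement's English description precedes it below -/
import Mathlib

section
/- Let q be a prime power, let k be an algebraically closed field containing 𝔽_{q²}, and let a₁, c ∈ k with a₁ ∈ 𝔽_{q²}^× and c ≠ 0. If the two equations (c^{q²} - c^{q²+q})·a₁^{q²+q} + (c^q - 1)·a₁^{q+1} = 0 and (c^q - 1)·a₁^{q²+q} + (c - c^{q+1})·a₁^{q+1} = 0 both hold, then c = 1. -/
/-!
Since `a₁` lies in a field with `q²` elements, `a₁ ^ q² = a₁`, so `a₁ ^ (q² + q) = a₁ ^ (q + 1)`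
and the second equation collapses to `(c ^ q - 1) * (1 - c) * a₁ ^ (q + 1) = 0`. As `a₁ ≠ 0`,
either `c = 1` or `c ^ q = 1`; in the latter case `c = 1` because the `q`-th power map is
injective in characteristic `p`, where `q` is a power of `p`.
-/

namespace Subfield

variable {k : Type*} [Field k] (F : Subfield k)

theorem pow_natCard_eq_self [Finite F] {a : k} (ha : a ∈ F) : a ^ Nat.card F = a := by
  have : Fintype F := Fintype.ofFinite F
  rw [Nat.card_eq_fintype_card]
  exact congrArg F.subtype (FiniteField.pow_card (⟨a, ha⟩ : F))

theorem charP_of_natCard_eq_prime_pow {p f : ℕ} [Fact p.Prime] (hF : Nat.card F = p ^ f) :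
    CharP k p := by
  have : Finite F := Nat.finite_of_card_ne_zero (hF ▸ pow_ne_zero f (Fact.out : p.Prime).ne_zero)
  have : Fintype F := Fintype.ofFinite F
  have : CharP F p := charP_of_card_eq_prime_pow (by rw [← Nat.card_eq_fintype_card, hF])
  exact charP_of_injective_ringHom F.subtype.injective p

end Subfield

theorem ExpChar.eq_one_of_pow_prime_pow_eq_one {R : Type*} [CommRing R] [IsReduced R]
    {p : ℕ} [ExpChar R p] (n : ℕ) {x : R} (hx : x ^ p ^ n = 1) : x = 1 := by
  simpa using (ExpChar.pow_prime_pow_mul_eq_one_iff p n 1 x).mp (by simpa using hx)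

theorem stmt_1_general (q : ℕ) (hq : IsPrimePow q) (k : Type*) [Field k]
    (F : Subfield k) (hF : Nat.card F = q ^ 2)
    (a₁ c : k) (ha₁F : a₁ ∈ F) (ha₁ : a₁ ≠ 0)
    (h2 : (c ^ q - 1) * a₁ ^ (q ^ 2 + q)
            + (c - c ^ (q + 1)) * a₁ ^ (q + 1) = 0) :
    c = 1 := by
  obtain ⟨p, n, hp, -, rfl⟩ := hq
  have : Fact p.Prime := ⟨hp.nat_prime⟩
  have : CharP k p := F.charP_of_natCard_eq_prime_pow (f := n * 2) (by rw [hF, pow_mul])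
  have : Finite F := Nat.finite_of_card_ne_zero (hF ▸ pow_ne_zero 2 (pow_ne_zero n hp.ne_zero))
  have ha₁_frob : a₁ ^ (p ^ n) ^ 2 = a₁ := hF ▸ F.pow_natCard_eq_self ha₁F
  have hfactor : (c ^ p ^ n - 1) * (1 - c) * a₁ ^ (p ^ n + 1) = 0 := by
    linear_combination h2 - (c ^ p ^ n - 1) * a₁ ^ p ^ n * ha₁_frob
  rcases mul_eq_zero.mp hfactor with hfactor | ha₁_pow
  · rcases mul_eq_zero.mp hfactor with hc_pow | hc
    · exact ExpChar.eq_one_of_pow_prime_pow_eq_one n (sub_eq_zero.mp hc_pow)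
    · exact (sub_eq_zero.mp hc).symm
  · exact absurd ha₁_pow (pow_ne_zero _ ha₁)

/-- Let `q` be a prime power, `k` an algebraically closed field containing a copy `F`
of `𝔽_{q²}` (a subfield with `q²` elements), and `a₁, c ∈ k` with `a₁ ∈ F \ {0}` and
`c ≠ 0`.  If `(c^{q²} - c^{q²+q})·a₁^{q²+q} + (c^q - 1)·a₁^{q+1} = 0` and
`(c^q - 1)·a₁^{q²+q} + (c - c^{q+1})·a₁^{q+1} = 0`, then `c = 1`. -/
theorem stmt_1 (q : ℕ) (hq : IsPrimePow q) (k : Type*) [Field k] [IsAlgClosed k]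
    (F : Subfield k) (hF : Nat.card F = q ^ 2)
    (a₁ c : k) (ha₁F : a₁ ∈ F) (ha₁ : a₁ ≠ 0) (hc : c ≠ 0)
    (h1 : (c ^ (q ^ 2) - c ^ (q ^ 2 + q)) * a₁ ^ (q ^ 2 + q)
            + (c ^ q - 1) * a₁ ^ (q + 1) = 0)
    (h2 : (c ^ q - 1) * a₁ ^ (q ^ 2 + q)
            + (c - c ^ (q + 1)) * a₁ ^ (q + 1) = 0) :
    c = 1 :=
  stmt_1_general q hq k F hF a₁ c ha₁F ha₁ h2
end

section
/- Let q be a prime power and let k ⊇ 𝔽_{q²} be a field. Suppose a₁, b₁, a₂, b₂ ∈ k satisfy the two equations -(a₁^q b₂)^{q+1} + a₁^{q²} b₁^q a₂^q b₂ + a₁^q b₁^{q²} a₂ b₂^q - (b₁^q a₂)^{q+1} = 0 and -(b₁ a₂^q)^{q+1} + a₁^q b₁ a₂^{q²} b₂^q + a₁ b₁^q a₂^q b₂^{q²} - (a₁ b₂^q)^{q+1} = 0, with (a₁,b₁) ≠ (0,0) and (a₂,b₂) ≠ (0,0). Then a₁ = 0 if and only if a₂ = 0, and b₁ = 0 if and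 only if b₂ = 0. -/
/-!
The first equation is invariant under `(a₁, b₁, a₂, b₂) ↦ (b₁, a₁, b₂, a₂)`, which swaps its outer
terms `(a₁^q b₂)^{q+1}` and `(b₁^q a₂)^{q+1}` and its two middle terms. If `a₁ b₂ = 0`, every
term except `(b₁^q a₂)^{q+1}` vanishes, so `b₁ a₂ = 0`; by the symmetry, `a₁ b₂ = 0 ↔ b₁ a₂ = 0`.
Since neither point is `(0, 0)`, this forces the zero patterns of the two points to agree.
-/

section

variable {R : Type*} [CommRing R]

/-- The left-hand side of the condition that the line through `(a₁ : b₁)` and `(a₂ : b₂)` on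
`C_{F_J}` lies on the Fermat surface of degree `q + 1`. -/
def fermatLineForm (q : ℕ) (a₁ b₁ a₂ b₂ : R) : R :=
  -(a₁ ^ q * b₂) ^ (q + 1) + a₁ ^ (q ^ 2) * b₁ ^ q * a₂ ^ q * b₂
    + a₁ ^ q * b₁ ^ (q ^ 2) * a₂ * b₂ ^ q - (b₁ ^ q * a₂) ^ (q + 1)

theorem fermatLineForm_swap (q : ℕ) (a₁ b₁ a₂ b₂ : R) :
    fermatLineForm q b₁ a₁ b₂ a₂ = fermatLineForm q a₁ b₁ a₂ b₂ := by
  unfold fermatLineForm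
  ring

variable [NoZeroDivisors R] {q : ℕ} {a₁ b₁ a₂ b₂ : R}

theorem mul_eq_zero_of_fermatLineForm_eq_zero (hq : q ≠ 0)
    (h : fermatLineForm q a₁ b₁ a₂ b₂ = 0) (hab : a₁ * b₂ = 0) : b₁ * a₂ = 0 := by
  have hpow : (b₁ ^ q * a₂) ^ (q + 1) = 0 := by
    rcases mul_eq_zero.1 hab with rfl | rfl <;>
      simpa [fermatLineForm, zero_pow hq, zero_pow (pow_ne_zero 2 hq)] using h
  simpa [pow_eq_zero_iff, hq] using hpow

theorem fermatLineForm_eq_zero_iff (hq : q ≠ 0) (h : fermatLineForm q a₁ b₁ a₂ b₂ = 0) :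
    a₁ * b₂ = 0 ↔ b₁ * a₂ = 0 :=
  ⟨mul_eq_zero_of_fermatLineForm_eq_zero hq h,
    mul_eq_zero_of_fermatLineForm_eq_zero hq (by rwa [fermatLineForm_swap])⟩

end

theorem stmt_2_general (q : ℕ) (hq : IsPrimePow q) (k : Type*) [Field k]
    (a₁ b₁ a₂ b₂ : k)
    (h1 : -(a₁ ^ q * b₂) ^ (q + 1) + a₁ ^ (q ^ 2) * b₁ ^ q * a₂ ^ q * b₂
            + a₁ ^ q * b₁ ^ (q ^ 2) * a₂ * b₂ ^ q - (b₁ ^ q * a₂) ^ (q + 1) = 0)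
    (hp1 : ¬(a₁ = 0 ∧ b₁ = 0)) (hp2 : ¬(a₂ = 0 ∧ b₂ = 0)) :
    (a₁ = 0 ↔ a₂ = 0) ∧ (b₁ = 0 ↔ b₂ = 0) := by
  have key := fermatLineForm_eq_zero_iff hq.pos.ne' h1
  simp only [mul_eq_zero] at key
  tauto

/-- Let `q` be a prime power and `k` a field containing a copy `F` of `𝔽_{q²}`.
If `a₁, b₁, a₂, b₂ ∈ k` satisfy the two displayed equations, with
`(a₁,b₁) ≠ (0,0)` and `(a₂,b₂) ≠ (0,0)`, then `a₁ = 0 ↔ a₂ = 0` and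
`b₁ = 0 ↔ b₂ = 0`. -/
theorem stmt_2 (q : ℕ) (hq : IsPrimePow q) (k : Type*) [Field k]
    (F : Subfield k) (hF : Nat.card F = q ^ 2)
    (a₁ b₁ a₂ b₂ : k)
    (h1 : -(a₁ ^ q * b₂) ^ (q + 1) + a₁ ^ (q ^ 2) * b₁ ^ q * a₂ ^ q * b₂
            + a₁ ^ q * b₁ ^ (q ^ 2) * a₂ * b₂ ^ q - (b₁ ^ q * a₂) ^ (q + 1) = 0)
    (h2 : -(b₁ * a₂ ^ q) ^ (q + 1) + a₁ ^ q * b₁ * a₂ ^ (q ^ 2) * b₂ ^ q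
            + a₁ * b₁ ^ q * a₂ ^ q * b₂ ^ (q ^ 2) - (a₁ * b₂ ^ q) ^ (q + 1) = 0)
    (hp1 : ¬(a₁ = 0 ∧ b₁ = 0)) (hp2 : ¬(a₂ = 0 ∧ b₂ = 0)) :
    (a₁ = 0 ↔ a₂ = 0) ∧ (b₁ = 0 ↔ b₂ = 0) :=
  stmt_2_general q hq k a₁ b₁ a₂ b₂ h1 hp1 hp2
end
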